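/- (Corollary 2.4) Let S be an m×n integer matrix with no zero column, with lcm period ρ₀, and let d, d' be positive divisors of ρ₀ with gcd(d, d') = 1. Suppose that for some positive integer s, for every nonempty J ⊆ [n] with |J| ≤ s one has gcd(e(J), d) = 1 or gcd(e(J), d') = 1. Then the polynomial P_1(t) + P_{dd'}(t) − P_d(t) − P_{d'}(t) has degree strictly less than m − s. -/

import Mathlib

/-!
If `ℓ(J) ≤ s`, a maximal linearly independent set of columns `t ⊆ J` satisfies
`|t| = ℓ(t) = ℓ(J) ≤ s`. The determinantal divisors of `S_J` divide those of `S_t`, so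
`e_{J,1} ⋯ e_{J,ℓ(J)} ∣ e_{t,1} ⋯ e_{t,ℓ(J)}`, and the hypothesis on `t` makes every `e_{J,j}`
coprime to `d` (or to `d'`). Then `e(J, d) = 1` and `e(J, dd') = e(J, d')` (or symmetrically), so
the coefficient `e(J, 1) + e(J, dd') − e(J, d) − e(J, d')` of the monomial of degree `m − ℓ(J)`
vanishes: only sets with `ℓ(J) > s` contribute, in degree `m − ℓ(J) < m − s`.
-/

/-- The `k`-th determinantal divisor of the submatrix `S_J`; one has
`detDivisor S J k = e_{J,1} ⋯ e_{J,k}` for `k ≤ rank S_J`, where the `e_{J,j}`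
are the elementary divisors of `S_J`. -/
def detDivisor {m n : ℕ} (S : Matrix (Fin m) (Fin n) ℤ) (J : Finset (Fin n)) (k : ℕ) : ℕ :=
  Finset.gcd Finset.univ
    (fun p : (Fin k → Fin m) × (Fin k → {j : Fin n // j ∈ J}) =>
      (Matrix.det (Matrix.of fun a b => S (p.1 a) (p.2 b).1)).natAbs)

/-- The constituent `P_d(t) = Σ_{J ⊆ [n]} (−1)^{|J|} e(J, d) t^{m−ℓ(J)}` of the
characteristic quasi-polynomial, where `e(J, d) = ∏_{j=1}^{ℓ(J)} gcd(e_{J,j}, d)`. -/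
noncomputable def Ppoly (m n : ℕ) (ℓ : Finset (Fin n) → ℕ)
    (e : Finset (Fin n) → ℕ → ℕ) (d : ℕ) : Polynomial ℤ :=
  ∑ J ∈ (Finset.univ : Finset (Fin n)).powerset,
    Polynomial.C ((-1) ^ J.card * ∏ j ∈ Finset.Icc 1 (ℓ J), (Nat.gcd (e J j) d : ℤ)) *
      Polynomial.X ^ (m - ℓ J)

section Rank

open Submodule Module

variable {R M : Type*} [CommRing R] [IsDomain R] [AddCommGroup M] [Module R M]

theorem finrank_span_eq_of_forall_exists_smul_mem {s t : Set M} (ht : t.Finite) (hst : s ⊆ t)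
    (h : ∀ z ∈ t, ∃ c : R, c ≠ 0 ∧ c • z ∈ span R s) :
    finrank R (span R t) = finrank R (span R s) := by
  have : Module.Finite R (span R t) := Module.Finite.span_of_finite R ht
  set N : Submodule R (span R t) := (span R s).comap (span R t).subtype
  have hsmul : ∀ z ∈ span R t, ∃ c : R, c ≠ 0 ∧ c • z ∈ span R s := by
    intro z hz
    induction hz using span_induction with
    | mem x hx => exact h x hx
    | zero => exact ⟨1, one_ne_zero, by simp⟩
    | add x y _ _ hx hy =>
      obtain ⟨c, hc, hcx⟩ := hx
      obtain ⟨c', hc', hcy⟩ := hy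
      refine ⟨c' * c, mul_ne_zero hc' hc, ?_⟩
      rw [smul_add, mul_smul, mul_comm, mul_smul]
      exact add_mem (smul_mem _ _ hcx) (smul_mem _ _ hcy)
    | smul a x _ hx =>
      obtain ⟨c, hc, hcx⟩ := hx
      exact ⟨c, hc, by rw [smul_comm]; exact smul_mem _ _ hcx⟩
  have htors : IsTorsion R (span R t ⧸ N) := by
    intro x
    obtain ⟨⟨z, hz⟩, rfl⟩ := N.mkQ_surjective x
    obtain ⟨c, hc, hcz⟩ := hsmul z hz
    exact ⟨⟨c, mem_nonZeroDivisors_of_ne_zero hc⟩, (Quotient.mk_eq_zero N).2 hcz⟩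
  have hN : finrank R N = finrank R (span R s) :=
    (comapSubtypeEquivOfLe (span_mono hst)).finrank_eq
  have := N.finrank_quotient_add_finrank
  rw [htors.finrank_eq_zero] at this
  omega

theorem exists_subset_finrank_span_image_eq_card {ι : Type*} (v : ι → M) (J : Finset ι) :
    ∃ t ⊆ J, finrank R (span R (v '' J)) = t.card ∧ finrank R (span R (v '' t)) = t.card := by
  classical
  obtain ⟨s, hs, hmax⟩ := exists_maximal_linearIndepOn R (fun j : J => v j)
  set w : J → M := fun j => v j
  set t := s.toFinset.map (Function.Embedding.subtype _)
  have hvt : v '' t = w '' s := by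
    simp only [t, Finset.coe_map, Function.Embedding.coe_subtype, Set.coe_toFinset,
      Set.image_image, w]
  have hvJ : v '' J = Set.range w := by
    ext; simp [w]
  have hcard : finrank R (span R (v '' t)) = t.card := by
    rw [hvt, Set.image_eq_range, finrank_span_eq_card hs, Finset.card_map, Set.toFinset_card]
  refine ⟨t, fun _ => Finset.property_of_mem_map_subtype _, ?_, hcard⟩
  rw [← hcard, hvJ, hvt]
  refine finrank_span_eq_of_forall_exists_smul_mem (Set.finite_range w)
    (Set.image_subset_range _ _) ?_
  rintro _ ⟨j, rfl⟩
  by_cases hj : j ∈ s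
  · exact ⟨1, one_ne_zero, by rw [one_smul]; exact subset_span (Set.mem_image_of_mem w hj)⟩
  · exact hmax j hj

theorem Matrix.exists_subset_rank_submatrix_eq_card {m ι : Type*} (S : Matrix m ι R)
    (J : Finset ι) :
    ∃ t ⊆ J, (S.submatrix id ((↑) : J → ι)).rank = t.card ∧
      (S.submatrix id ((↑) : t → ι)).rank = t.card := by
  have hcols : ∀ K : Finset ι,
      (S.submatrix id ((↑) : K → ι)).rank = finrank R (span R (S.col '' K)) := fun K => by
    rw [Matrix.rank_eq_finrank_span_cols, Set.image_eq_range]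
    rfl
  simpa only [hcols] using exists_subset_finrank_span_image_eq_card S.col J

end Rank

theorem detDivisor_dvd_of_subset {m n : ℕ} (S : Matrix (Fin m) (Fin n) ℤ) {t J : Finset (Fin n)}
    (h : t ⊆ J) (k : ℕ) : detDivisor S J k ∣ detDivisor S t k :=
  Finset.dvd_gcd fun p _ => Finset.gcd_dvd (Finset.mem_univ
    ((p.1, fun a => ⟨(p.2 a).1, h (p.2 a).2⟩) : (Fin k → Fin m) × (Fin k → {j : Fin n // j ∈ J})))

theorem dvd_of_mem_Icc_of_forall_dvd_succ {α : Type*} [Monoid α] {a : ℕ → α} {k : ℕ}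
    (h : ∀ j, 1 ≤ j → j + 1 ≤ k → a j ∣ a (j + 1)) {j : ℕ} (hj : j ∈ Finset.Icc 1 k) :
    a j ∣ a k := by
  obtain ⟨hj1, hjk⟩ := Finset.mem_Icc.1 hj
  clear hj
  induction k, hjk using Nat.le_induction with
  | base => exact dvd_rfl
  | succ k hk ih => exact (ih fun i hi _ => h i hi (by omega)).trans (h k (hj1.trans hk) le_rfl)

theorem Nat.forall_coprime_of_prod_Icc_dvd {a b : ℕ → ℕ} {k D : ℕ}
    (hb : ∀ j, 1 ≤ j → j + 1 ≤ k → b j ∣ b (j + 1))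
    (hab : ∏ j ∈ Finset.Icc 1 k, a j ∣ ∏ j ∈ Finset.Icc 1 k, b j) (hD : Coprime (b k) D) :
    ∀ j ∈ Finset.Icc 1 k, Coprime (a j) D :=
  coprime_prod_left_iff.1 <| Coprime.coprime_dvd_left hab <|
    Coprime.prod_left fun _ hj => hD.coprime_dvd_left (dvd_of_mem_Icc_of_forall_dvd_succ hb hj)

theorem prod_gcd_add_sub_sub_eq_zero {ι : Type*} {I : Finset ι} {a : ι → ℕ} {d d' : ℕ}
    (h : (∀ j ∈ I, Nat.Coprime (a j) d) ∨ ∀ j ∈ I, Nat.Coprime (a j) d') :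
    (∏ j ∈ I, (Nat.gcd (a j) 1 : ℤ)) + ∏ j ∈ I, (Nat.gcd (a j) (d * d') : ℤ) -
      ∏ j ∈ I, (Nat.gcd (a j) d : ℤ) - ∏ j ∈ I, (Nat.gcd (a j) d' : ℤ) = 0 := by
  simp only [Nat.gcd_one_right, Nat.cast_one, Finset.prod_const_one]
  rcases h with h | h
  · have hd : ∏ j ∈ I, (Nat.gcd (a j) d : ℤ) = 1 :=
      Finset.prod_eq_one fun j hj => by rw [(h j hj).gcd_eq_one, Nat.cast_one]
    have hdd' : ∏ j ∈ I, (Nat.gcd (a j) (d * d') : ℤ) = ∏ j ∈ I, (Nat.gcd (a j) d' : ℤ) :=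
      Finset.prod_congr rfl fun j hj => by rw [(h j hj).symm.gcd_mul_left_cancel_right]
    rw [hd, hdd']
    ring
  · have hd' : ∏ j ∈ I, (Nat.gcd (a j) d' : ℤ) = 1 :=
      Finset.prod_eq_one fun j hj => by rw [(h j hj).gcd_eq_one, Nat.cast_one]
    have hdd' : ∏ j ∈ I, (Nat.gcd (a j) (d * d') : ℤ) = ∏ j ∈ I, (Nat.gcd (a j) d : ℤ) :=
      Finset.prod_congr rfl fun j hj => by
        rw [mul_comm, (h j hj).symm.gcd_mul_left_cancel_right]
    rw [hd', hdd']
    ring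

theorem Polynomial.degree_sum_C_mul_X_pow_lt {α R : Type*} [Semiring R] {s : Finset α}
    {c : α → R} {k : α → ℕ} {N : ℕ} (h : ∀ a ∈ s, c a ≠ 0 → k a < N) :
    (∑ a ∈ s, C (c a) * X ^ k a).degree < (N : WithBot ℕ) := by
  refine (degree_sum_le _ _).trans_lt
    ((Finset.sup_lt_iff (WithBot.bot_lt_coe N)).2 fun a ha => ?_)
  by_cases hc : c a = 0
  · simp [hc]
  · exact (degree_C_mul_X_pow_le _ _).trans_lt (WithBot.coe_lt_coe.2 (h a ha hc))

theorem ppoly_add_sub_sub_eq_sum (m n : ℕ) (ℓ : Finset (Fin n) → ℕ) (e : Finset (Fin n) → ℕ → ℕ)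
    (a b c d : ℕ) :
    Ppoly m n ℓ e a + Ppoly m n ℓ e b - Ppoly m n ℓ e c - Ppoly m n ℓ e d =
      ∑ J ∈ (Finset.univ : Finset (Fin n)).powerset, Polynomial.C ((-1) ^ J.card *
        ((∏ j ∈ Finset.Icc 1 (ℓ J), (Nat.gcd (e J j) a : ℤ)) +
          ∏ j ∈ Finset.Icc 1 (ℓ J), (Nat.gcd (e J j) b : ℤ) -
          ∏ j ∈ Finset.Icc 1 (ℓ J), (Nat.gcd (e J j) c : ℤ) -
          ∏ j ∈ Finset.Icc 1 (ℓ J), (Nat.gcd (e J j) d : ℤ))) * Polynomial.X ^ (m - ℓ J) := by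
  simp only [Ppoly, ← Finset.sum_add_distrib, ← Finset.sum_sub_distrib]
  refine Finset.sum_congr rfl fun J _ => ?_
  simp only [map_mul, map_add, map_sub]
  ring

theorem stmt_3_general (m n : ℕ)
    (S : Matrix (Fin m) (Fin n) ℤ)
    (ℓ : Finset (Fin n) → ℕ)
    (hℓ : ∀ J, ℓ J = (Matrix.of fun i (j : {j : Fin n // j ∈ J}) => S i j.1).rank)
    (e : Finset (Fin n) → ℕ → ℕ)
    (hchain : ∀ J, ∀ j, 1 ≤ j → j + 1 ≤ ℓ J → e J j ∣ e J (j + 1))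
    (hsnf : ∀ J, ∀ k ≤ ℓ J, ∏ j ∈ Finset.Icc 1 k, e J j = detDivisor S J k)
    (d d' : ℕ)
    (s : ℕ)
    (hcond : ∀ J : Finset (Fin n), J.Nonempty → J.card ≤ s →
      Nat.gcd (e J (ℓ J)) d = 1 ∨ Nat.gcd (e J (ℓ J)) d' = 1) :
    (Ppoly m n ℓ e 1 + Ppoly m n ℓ e (d * d') - Ppoly m n ℓ e d -
        Ppoly m n ℓ e d').degree < ((m - s : ℕ) : WithBot ℕ) := by
  have hℓm : ∀ J, ℓ J ≤ m := fun J =>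
    (hℓ J).trans_le ((Matrix.rank_le_card_height _).trans_eq (Fintype.card_fin m))
  have hsmall : ∀ J, ℓ J ≤ s → (∀ j ∈ Finset.Icc 1 (ℓ J), Nat.Coprime (e J j) d) ∨
      ∀ j ∈ Finset.Icc 1 (ℓ J), Nat.Coprime (e J j) d' := by
    intro J hJs
    obtain ⟨t, htJ, hJ, ht⟩ := S.exists_subset_rank_submatrix_eq_card J
    replace hJ : ℓ J = t.card := (hℓ J).trans hJ
    replace ht : ℓ t = t.card := (hℓ t).trans ht
    rcases t.eq_empty_or_nonempty with rfl | ht0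
    · simp [hJ]
    have hdvd : ∏ j ∈ Finset.Icc 1 (ℓ t), e J j ∣ ∏ j ∈ Finset.Icc 1 (ℓ t), e t j := by
      rw [hsnf J _ (by omega), hsnf t _ le_rfl]
      exact detDivisor_dvd_of_subset S htJ _
    rw [hJ, ← ht]
    exact (hcond t ht0 (by omega)).imp
      (Nat.forall_coprime_of_prod_Icc_dvd (hchain t) hdvd)
      (Nat.forall_coprime_of_prod_Icc_dvd (hchain t) hdvd)
  rw [ppoly_add_sub_sub_eq_sum]
  refine Polynomial.degree_sum_C_mul_X_pow_lt fun J _ hJ => ?_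
  have hsJ : s < ℓ J := by
    by_contra! h
    exact hJ (by rw [prod_gcd_add_sub_sub_eq_zero (hsmall J h), mul_zero])
  have := hℓm J
  omega

/-- Corollary 2.4: if `d, d'` are coprime positive divisors of the lcm period `ρ₀` and,
for some positive integer `s`, `gcd(e(J), d) = 1` or `gcd(e(J), d') = 1` for every
nonempty `J` with `|J| ≤ s`, then `deg (P_1 + P_{dd'} − P_d − P_{d'}) < m − s`. -/
theorem stmt_3 (m n : ℕ) (hm : 0 < m) (hn : 0 < n)
    (S : Matrix (Fin m) (Fin n) ℤ) (hS : ∀ j, ∃ i, S i j ≠ 0)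
    (ℓ : Finset (Fin n) → ℕ)
    (hℓ : ∀ J, ℓ J = (Matrix.of fun i (j : {j : Fin n // j ∈ J}) => S i j.1).rank)
    (e : Finset (Fin n) → ℕ → ℕ)
    (hpos : ∀ J, ∀ j ∈ Finset.Icc 1 (ℓ J), 0 < e J j)
    (hchain : ∀ J, ∀ j, 1 ≤ j → j + 1 ≤ ℓ J → e J j ∣ e J (j + 1))
    (hsnf : ∀ J, ∀ k ≤ ℓ J, ∏ j ∈ Finset.Icc 1 k, e J j = detDivisor S J k)
    (ρ : ℕ)
    (hρ : ρ = Finset.lcm ((Finset.univ : Finset (Fin n)).powerset.filter (· ≠ ∅))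
      (fun J => e J (ℓ J)))
    (d d' : ℕ) (hd : 0 < d) (hd' : 0 < d') (hdρ : d ∣ ρ) (hd'ρ : d' ∣ ρ)
    (hco : Nat.gcd d d' = 1)
    (s : ℕ) (hs : 0 < s)
    (hcond : ∀ J : Finset (Fin n), J.Nonempty → J.card ≤ s →
      Nat.gcd (e J (ℓ J)) d = 1 ∨ Nat.gcd (e J (ℓ J)) d' = 1) :
    (Ppoly m n ℓ e 1 + Ppoly m n ℓ e (d * d') - Ppoly m n ℓ e d -
        Ppoly m n ℓ e d').degree < ((m - s : ℕ) : WithBot ℕ) :=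
  stmt_3_general m n S ℓ hℓ e hchain hsnf d d' s hcond
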